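/- For x ≥ 2 and 1 ≤ r ≤ x/4, one has the exchange-of-integration identity ∫_{√(x/r)}^{√x} Li(x/u)/(log u) du = ∫_{√x}^{√(xr)} Li(x/t)/(log t) dt + Li(√x)² − Li(√(xr))·Li(√(x/r)). -/

import Mathlib

open MeasureTheory intervalIntegral Set

/-- The logarithmic integral `Li y = ∫₂^y du / log u` (zero for `y < 2`). -/
noncomputable def Li (y : ℝ) : ℝ :=
  if y < 2 then 0 else ∫ u in (2 : ℝ)..y, 1 / Real.log u

lemma log_ne {u : ℝ} (hu : 2 ≤ u) : Real.log u ≠ 0 :=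
  ne_of_gt (Real.log_pos (by linarith))

lemma invlog_contOn : ContinuousOn (fun u => 1 / Real.log u) (Ici 2) := fun u hu =>
  (continuousAt_const.div (Real.continuousAt_log (by intro h; rw [h] at hu; norm_num at hu))
    (log_ne hu)).continuousWithinAt

lemma Li_eq {y : ℝ} (hy : 2 ≤ y) : Li y = ∫ u in (2:ℝ)..y, 1 / Real.log u :=
  if_neg (not_lt.2 hy)

lemma Li_contOn {M : ℝ} : ContinuousOn Li (Icc 2 M) := by
  rcases le_or_gt 2 M with h | h
  · have hint : IntegrableOn (fun u => 1 / Real.log u) (uIcc 2 M) := by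
      rw [uIcc_of_le h]
      exact (invlog_contOn.mono Icc_subset_Ici_self).integrableOn_Icc
    have h2 := intervalIntegral.continuousOn_primitive_interval (a := 2) (b := M) hint
    rw [uIcc_of_le h] at h2
    exact h2.congr fun y hy => Li_eq hy.1
  · rw [Icc_eq_empty (by linarith)]; exact continuousOn_empty _

lemma Li_hasDerivAt {y : ℝ} (hy : 2 < y) : HasDerivAt Li (1 / Real.log y) y := by
  have hint : IntervalIntegrable (fun u => 1 / Real.log u) MeasureTheory.volume 2 y :=
    (invlog_contOn.mono (by rw [uIcc_of_le hy.le]; exact Icc_subset_Ici_self)).intervalIntegrable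
  have hmeas : StronglyMeasurableAtFilter (fun u => 1 / Real.log u) (nhds y) :=
    ((measurable_const.div Real.measurable_log).stronglyMeasurable).stronglyMeasurableAtFilter
  have hcont : ContinuousAt (fun u => 1 / Real.log u) y :=
    continuousAt_const.div (Real.continuousAt_log (by linarith)) (log_ne hy.le)
  have hF := intervalIntegral.integral_hasDerivAt_right hint hmeas hcont
  refine hF.congr_of_eventuallyEq ?_
  filter_upwards [Ioi_mem_nhds hy] with z hz
  exact Li_eq (le_of_lt hz)

lemma hasDerivAt_div_const_fun (x : ℝ) {t : ℝ} (ht : t ≠ 0) :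
    HasDerivAt (fun s => x / s) (-(x / t ^ 2)) t := by
  have h := (hasDerivAt_inv ht).const_mul x
  simpa [div_eq_mul_inv, mul_neg] using h

theorem stmt_15 (x r : ℝ) (hr : 1 ≤ r) (hrx : r ≤ x / 4) :
    (∫ u in Real.sqrt (x / r)..Real.sqrt x, Li (x / u) / Real.log u) =
      (∫ t in Real.sqrt x..Real.sqrt (x * r), Li (x / t) / Real.log t)
      + Li (Real.sqrt x) ^ 2
      - Li (Real.sqrt (x * r)) * Li (Real.sqrt (x / r)) := by
  have hr0 : (0:ℝ) < r := by linarith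
  have hx4 : (4:ℝ) ≤ x := by linarith
  have hx0 : (0:ℝ) < x := by linarith
  set a := Real.sqrt x with ha
  set b := Real.sqrt (x * r) with hb
  set c := Real.sqrt (x / r) with hc
  have h24 : (2:ℝ) = Real.sqrt 4 := by
    rw [show (4:ℝ) = 2 ^ 2 by norm_num, Real.sqrt_sq (by norm_num)]
  have ha2 : 2 ≤ a := by rw [ha, h24]; exact Real.sqrt_le_sqrt hx4
  have hc2 : 2 ≤ c := by
    rw [hc, h24]; exact Real.sqrt_le_sqrt ((le_div_iff₀ hr0).2 (by linarith))
  have hca : c ≤ a := Real.sqrt_le_sqrt (div_le_self hx0.le hr)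
  have hab : a ≤ b := Real.sqrt_le_sqrt (le_mul_of_one_le_right hx0.le hr)
  have hb2 : 2 ≤ b := ha2.trans hab
  have ha0 : (0:ℝ) < a := by linarith
  have hb0 : (0:ℝ) < b := by linarith
  have hc0 : (0:ℝ) < c := by linarith
  have hcb : c * b = x := by
    rw [hc, hb, ← Real.sqrt_mul (by positivity),
      show x / r * (x * r) = x ^ 2 by field_simp, Real.sqrt_sq hx0.le]
  have hxa : x / a = a := Real.div_sqrt
  have hxb : x / b = c := (div_eq_iff hb0.ne').2 hcb.symm
  have hxc : x / c = b := (div_eq_iff hc0.ne').2 (by rw [mul_comm]; exact hcb.symm)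
  -- mapping facts
  have hmap : ∀ t ∈ Icc a b, x / t ∈ Icc c a := by
    intro t ht
    have ht0 : 0 < t := lt_of_lt_of_le ha0 ht.1
    constructor
    · rw [← hxb]; gcongr; exact ht.2
    · rw [← hxa]; gcongr; exact ht.1
  have hmap2 : ∀ u ∈ Icc c a, x / u ∈ Icc a b := by
    intro u hu
    have hu0 : 0 < u := lt_of_lt_of_le hc0 hu.1
    constructor
    · rw [← hxa]; gcongr; exact hu.2
    · rw [← hxc]; gcongr; exact hu.1
  -- continuity facts
  have hdiv_ab : ContinuousOn (fun t => x / t) (Icc a b) :=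
    continuousOn_const.div continuousOn_id fun t ht => (lt_of_lt_of_le ha0 ht.1).ne'
  have hdiv_ca : ContinuousOn (fun u => x / u) (Icc c a) :=
    continuousOn_const.div continuousOn_id fun u hu => (lt_of_lt_of_le hc0 hu.1).ne'
  have hlog_ab : ContinuousOn Real.log (Icc a b) := fun t ht =>
    (Real.continuousAt_log (lt_of_lt_of_le ha0 ht.1).ne').continuousWithinAt
  have hlog_ca : ContinuousOn Real.log (Icc c a) := fun u hu =>
    (Real.continuousAt_log (lt_of_lt_of_le hc0 hu.1).ne').continuousWithinAt
  have hLi_ab : ContinuousOn Li (Icc a b) :=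
    Li_contOn.mono (Icc_subset_Icc_left (by linarith))
  have hLi_xt_ab : ContinuousOn (fun t => Li (x / t)) (Icc a b) :=
    (Li_contOn (M := a)).comp hdiv_ab fun t ht => ⟨(hmap t ht).1.trans' hc2, (hmap t ht).2⟩
  have hLi_xt_ca : ContinuousOn (fun u => Li (x / u)) (Icc c a) :=
    (Li_contOn (M := b)).comp hdiv_ca fun u hu => ⟨(hmap2 u hu).1.trans' ha2, (hmap2 u hu).2⟩
  have hlogxt_ab : ContinuousOn (fun t => Real.log (x / t)) (Icc a b) :=
    hlog_ca.comp hdiv_ab hmap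
  have hg_ca : ContinuousOn (fun u => Li (x / u) / Real.log u) (Icc c a) :=
    hLi_xt_ca.div hlog_ca fun u hu => log_ne (hc2.trans hu.1)
  have hg1_ab : ContinuousOn (fun t => Li (x / t) / Real.log t) (Icc a b) :=
    hLi_xt_ab.div hlog_ab fun t ht => log_ne (ha2.trans ht.1)
  have hg2_ab : ContinuousOn (fun t => x / t ^ 2 * (Li t / Real.log (x / t))) (Icc a b) := by
    refine ContinuousOn.mul ?_ (hLi_ab.div hlogxt_ab fun t ht => log_ne (hc2.trans (hmap t ht).1))
    exact continuousOn_const.div (continuousOn_pow 2) fun t ht =>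
      pow_ne_zero 2 (lt_of_lt_of_le ha0 ht.1).ne'
  have hG_ab : ContinuousOn (fun t => Li t * Li (x / t)) (Icc a b) := hLi_ab.mul hLi_xt_ab
  -- Step A: substitution u = x / t
  have hsub : (∫ u in c..a, Li (x / u) / Real.log u)
      = ∫ t in a..b, x / t ^ 2 * (Li t / Real.log (x / t)) := by
    have hder : ∀ t ∈ uIcc a b, HasDerivAt (fun s => x / s) (-(x / t ^ 2)) t := by
      intro t ht
      rw [uIcc_of_le hab] at ht
      exact hasDerivAt_div_const_fun x (lt_of_lt_of_le ha0 ht.1).ne'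
    have hder' : ContinuousOn (fun t => -(x / t ^ 2)) (uIcc a b) := by
      rw [uIcc_of_le hab]
      exact (continuousOn_const.div (continuousOn_pow 2) fun t ht =>
        pow_ne_zero 2 (lt_of_lt_of_le ha0 ht.1).ne').neg
    have hg : ContinuousOn (fun u => Li (x / u) / Real.log u) ((fun s => x / s) '' uIcc a b) := by
      refine hg_ca.mono ?_
      rw [uIcc_of_le hab]
      exact image_subset_iff.mpr hmap
    have h := intervalIntegral.integral_comp_smul_deriv' hder hder' hg
    simp only [Function.comp_apply] at h
    rw [hxa, hxb] at h
    have heq : ∀ t ∈ uIcc a b,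
        (-(x / t ^ 2)) • (Li (x / (x / t)) / Real.log (x / t))
          = -(x / t ^ 2 * (Li t / Real.log (x / t))) := by
      intro t ht
      rw [uIcc_of_le hab] at ht
      have ht0 : t ≠ 0 := (lt_of_lt_of_le ha0 ht.1).ne'
      have : x / (x / t) = t := by field_simp
      rw [smul_eq_mul, this]; ring
    rw [intervalIntegral.integral_congr heq, intervalIntegral.integral_neg,
      intervalIntegral.integral_symm c a] at h
    exact (neg_inj.1 h).symm
  -- Step B: fundamental theorem of calculus for Li t * Li (x/t)
  have hftc : (∫ t in a..b,
        (Li (x / t) / Real.log t - x / t ^ 2 * (Li t / Real.log (x / t))))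
      = Li b * Li (x / b) - Li a * Li (x / a) := by
    apply intervalIntegral.integral_eq_sub_of_hasDeriv_right (f := fun t => Li t * Li (x / t))
      (f' := fun t => Li (x / t) / Real.log t - x / t ^ 2 * (Li t / Real.log (x / t)))
    · rw [uIcc_of_le hab]; exact hG_ab
    · rw [min_eq_left hab, max_eq_right hab]
      intro t ht
      have ht2 : 2 < t := lt_of_le_of_lt ha2 ht.1
      have hxt2 : 2 < x / t := by
        refine lt_of_le_of_lt hc2 ?_
        rw [← hxb]; gcongr; exact ht.2
      have h1 : HasDerivAt Li (1 / Real.log t) t := Li_hasDerivAt ht2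
      have h2 : HasDerivAt (fun s => x / s) (-(x / t ^ 2)) t :=
        hasDerivAt_div_const_fun x (by linarith)
      have h3 : HasDerivAt (fun s => Li (x / s)) (1 / Real.log (x / t) * -(x / t ^ 2)) t :=
        (Li_hasDerivAt hxt2).comp t h2
      have h4 := h1.mul h3
      refine (HasDerivAt.hasDerivWithinAt ?_)
      exact h4.congr_deriv (by ring)
    · exact ((hg1_ab.sub hg2_ab).mono (uIcc_of_le hab).subset).intervalIntegrable
  have hint1 : IntervalIntegrable (fun t => Li (x / t) / Real.log t) MeasureTheory.volume a b :=
    (hg1_ab.mono (uIcc_of_le hab).subset).intervalIntegrable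
  have hint2 : IntervalIntegrable (fun t => x / t ^ 2 * (Li t / Real.log (x / t)))
      MeasureTheory.volume a b :=
    (hg2_ab.mono (uIcc_of_le hab).subset).intervalIntegrable
  rw [intervalIntegral.integral_sub hint1 hint2] at hftc
  rw [hxa, hxb] at hftc
  rw [hsub]
  have hLa : Li a * Li a = Li a ^ 2 := (sq (Li a)).symm
  linarith [hftc]
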